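/- Let $f : \mathbb{R}^n \to \mathbb{R}$ be twice continuously differentiable with $L_H$-Lipschitz continuous Hessian. Let $x \in \mathbb{R}^n$, and let $H \in \mathbb{R}^{n \times n}$ be symmetric with smallest eigenvalue $\lambda < 0$. Suppose $p \in \mathbb{R}^n$ satisfies: $p^{\mathsf{T}} H p \leq \gamma \lambda \|p\|_2^2$ with $\gamma \in (0,1]$; $\|p\|_2 = \delta|\lambda|$ with $\delta > 0$; $\nabla f(x)^{\mathsf{T}} p \leq 0$; and $\|(H - \nabla^2 f(x))p\|_2 \leq \gamma_H |\lambda| \|p\|_2$ with $\gamma_H \in [0,\gamma)$. Then for any step size $0 < \beta \leq \frac{\gamma - \gamma_H}{\delta L_H}$, one has $f(x + \beta p) \leq f(x) - \frac{1}{3}(\gamma - \gamma_H)\beta^2 \delta^2 |\lambda|^3$. -/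

import Mathlib

/-!
Along the segment from `x` to `x + β • p`, the Lipschitz Hessian yields the cubic Taylor upper
bound. Its linear term is nonpositive, the accuracy of `H` bounds the true curvature along `p` by
`-(γ - γH) |λ| ‖p‖²`, and the step-size restriction makes the cubic remainder at most a third of
the resulting quadratic decrease.
-/

open RealInnerProductSpace Set

theorem hasDerivAt_cubic (a b c d t : ℝ) :
    HasDerivAt (fun s => a + b * s + c * s ^ 2 / 2 + d * s ^ 3 / 6)
      (b + c * t + d * t ^ 2 / 2) t := by
  have h := ((((hasDerivAt_id' t).const_mul b).const_add a).add
    (((hasDerivAt_pow 2 t).const_mul c).div_const 2)).add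
    (((hasDerivAt_pow 3 t).const_mul d).div_const 6)
  exact h.congr_deriv (by norm_num; ring)

theorem le_cubic_of_second_deriv_le {φ φ' φ'' : ℝ → ℝ} {M : ℝ}
    (hφ : ∀ t, HasDerivAt φ (φ' t) t) (hφ' : ∀ t, HasDerivAt φ' (φ'' t) t)
    (hM : ∀ t, 0 ≤ t → φ'' t ≤ φ'' 0 + M * t) {t : ℝ} (ht : 0 ≤ t) :
    φ t ≤ φ 0 + φ' 0 * t + φ'' 0 * t ^ 2 / 2 + M * t ^ 3 / 6 := by
  have hquad : ∀ s ∈ Icc 0 t, φ' s ≤ φ' 0 + φ'' 0 * s + M * s ^ 2 / 2 + 0 * s ^ 3 / 6 :=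
    image_le_of_deriv_right_le_deriv_boundary
      (fun s _ => (hφ' s).continuousAt.continuousWithinAt) (fun s _ => (hφ' s).hasDerivWithinAt)
      (by simp) (fun s _ => (hasDerivAt_cubic _ _ _ _ s).continuousAt.continuousWithinAt)
      (fun s _ => (hasDerivAt_cubic _ _ _ _ s).hasDerivWithinAt)
      (fun s hs => by simpa using hM s hs.1)
  exact image_le_of_deriv_right_le_deriv_boundary
    (fun s _ => (hφ s).continuousAt.continuousWithinAt) (fun s _ => (hφ s).hasDerivWithinAt)
    (by simp) (fun s _ => (hasDerivAt_cubic _ _ _ _ s).continuousAt.continuousWithinAt)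
    (fun s _ => (hasDerivAt_cubic _ _ _ _ s).hasDerivWithinAt)
    (fun s hs => by simpa using hquad s (Ico_subset_Icc_self hs)) ⟨ht, le_rfl⟩

section InnerProductSpace

variable {E : Type*} [NormedAddCommGroup E] [InnerProductSpace ℝ E]

theorem ContDiff.differentiable_gradient [CompleteSpace E] {f : E → ℝ} (hf : ContDiff ℝ 2 f) :
    Differentiable ℝ (gradient f) := by
  have : ContDiff ℝ 1 (gradient f) :=
    (InnerProductSpace.toDual ℝ E).symm.toContinuousLinearEquiv.contDiff.comp
      (hf.fderiv_right (by norm_num))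
  exact this.differentiable (by norm_num)

theorem hasDerivAt_comp_add_smul {F : Type*} [NormedAddCommGroup F] [NormedSpace ℝ F]
    {g : E → F} {x v : E} {t : ℝ} (hg : DifferentiableAt ℝ g (x + t • v)) :
    HasDerivAt (fun s : ℝ => g (x + s • v)) (fderiv ℝ g (x + t • v) v) t := by
  have hline : HasDerivAt (fun s : ℝ => x + s • v) v t := by
    simpa using ((hasDerivAt_id t).smul_const v).const_add x
  exact hg.hasFDerivAt.comp_hasDerivAt t hline

theorem inner_apply_self_le_add_norm_sub_mul (A B : E →L[ℝ] E) (v : E) :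
    ⟪v, A v⟫ ≤ ⟪v, B v⟫ + ‖B v - A v‖ * ‖v‖ := by
  have h := real_inner_le_norm v (A v - B v)
  rw [inner_sub_right, norm_sub_rev] at h
  linarith [mul_comm ‖v‖ ‖B v - A v‖]

theorem le_taylor_cubic_of_lipschitz_hessian [CompleteSpace E] {f : E → ℝ} {L : ℝ}
    (hf : ContDiff ℝ 2 f)
    (hlip : ∀ x y, ‖fderiv ℝ (gradient f) x - fderiv ℝ (gradient f) y‖ ≤ L * ‖x - y‖)
    (x v : E) :
    f (x + v) ≤ f x + ⟪gradient f x, v⟫ + ⟪v, fderiv ℝ (gradient f) x v⟫ / 2 + L * ‖v‖ ^ 3 / 6 := by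
  set D := fderiv ℝ (gradient f)
  have hφ (t : ℝ) : HasDerivAt (fun s : ℝ => f (x + s • v)) ⟪gradient f (x + t • v), v⟫ t := by
    rw [inner_gradient_left]
    exact hasDerivAt_comp_add_smul ((hf.differentiable (by norm_num)) _)
  have hφ' (t : ℝ) :
      HasDerivAt (fun s : ℝ => ⟪gradient f (x + s • v), v⟫) ⟪v, D (x + t • v) v⟫ t := by
    have h := (hasDerivAt_comp_add_smul (hf.differentiable_gradient (x + t • v))).inner ℝ
      (hasDerivAt_const t v)
    simpa [real_inner_comm] using h
  have hM (t : ℝ) (ht : 0 ≤ t) :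
      ⟪v, D (x + t • v) v⟫ ≤ ⟪v, D (x + (0 : ℝ) • v) v⟫ + L * ‖v‖ ^ 3 * t := by
    have hop : ‖D x v - D (x + t • v) v‖ ≤ L * ‖v‖ ^ 2 * t := calc
      ‖D x v - D (x + t • v) v‖ ≤ ‖D x - D (x + t • v)‖ * ‖v‖ :=
        (D x - D (x + t • v)).le_opNorm v
      _ ≤ L * ‖t • v‖ * ‖v‖ := by
        gcongr
        simpa using hlip x (x + t • v)
      _ = L * ‖v‖ ^ 2 * t := by rw [norm_smul, Real.norm_of_nonneg ht]; ring
    have := inner_apply_self_le_add_norm_sub_mul (D (x + t • v)) (D x) v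
    simp only [zero_smul, add_zero]
    nlinarith [norm_nonneg v]
  simpa [real_inner_comm] using le_cubic_of_second_deriv_le hφ hφ' hM zero_le_one

end InnerProductSpace

theorem negative_curvature_step_decrease_general {n : ℕ} (f : EuclideanSpace ℝ (Fin n) → ℝ)
    (LH : ℝ) (hLH : 0 < LH) (hf : ContDiff ℝ 2 f)
    (hlip : ∀ x y, ‖fderiv ℝ (gradient f) x - fderiv ℝ (gradient f) y‖ ≤ LH * ‖x - y‖)
    (x p : EuclideanSpace ℝ (Fin n)) (H : EuclideanSpace ℝ (Fin n) →L[ℝ] EuclideanSpace ℝ (Fin n))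
    (lam : ℝ) (hlam : lam < 0)
    (γ δ γH : ℝ) (hδ : 0 < δ)
    (hp1 : ⟪p, H p⟫ ≤ γ * lam * ‖p‖ ^ 2)
    (hp2 : ‖p‖ = δ * |lam|)
    (hp3 : ⟪gradient f x, p⟫ ≤ 0)
    (hp4 : ‖H p - fderiv ℝ (gradient f) x p‖ ≤ γH * |lam| * ‖p‖)
    (β : ℝ) (hβ0 : 0 < β) (hβ : β ≤ (γ - γH) / (δ * LH)) :
    f (x + β • p) ≤ f x - (1 / 3) * (γ - γH) * β ^ 2 * δ ^ 2 * |lam| ^ 3 := by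
  set D := fderiv ℝ (gradient f) x
  have hcurv : ⟪p, D p⟫ ≤ -((γ - γH) * δ ^ 2 * |lam| ^ 3) := by
    have h := inner_apply_self_le_add_norm_sub_mul D H p
    have h4 := mul_le_mul_of_nonneg_right hp4 (norm_nonneg p)
    have hcube : lam * |lam| ^ 2 = -|lam| ^ 3 := by rw [abs_of_neg hlam]; ring
    rw [hp2] at h h4 hp1
    linear_combination h + h4 + hp1 + γ * δ ^ 2 * hcube
  have hcubic : LH * β * ‖p‖ ^ 3 ≤ (γ - γH) * δ ^ 2 * |lam| ^ 3 := by
    rw [le_div_iff₀ (by positivity)] at hβ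
    rw [hp2]
    have h := mul_le_mul_of_nonneg_right hβ (by positivity : 0 ≤ δ ^ 2 * |lam| ^ 3)
    linarith
  calc f (x + β • p)
      ≤ f x + ⟪gradient f x, β • p⟫ + ⟪β • p, D (β • p)⟫ / 2 + LH * ‖β • p‖ ^ 3 / 6 :=
        le_taylor_cubic_of_lipschitz_hessian hf hlip x (β • p)
    _ = f x + β * ⟪gradient f x, p⟫ + β ^ 2 * ⟪p, D p⟫ / 2
          + β ^ 2 * (LH * β * ‖p‖ ^ 3) / 6 := by
        simp only [map_smul, real_inner_smul_left, real_inner_smul_right, norm_smul,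
          Real.norm_of_nonneg hβ0.le]
        ring
    _ ≤ f x + β * 0 + β ^ 2 * -((γ - γH) * δ ^ 2 * |lam| ^ 3) / 2
          + β ^ 2 * ((γ - γH) * δ ^ 2 * |lam| ^ 3) / 6 := by
        gcongr
    _ = f x - (1 / 3) * (γ - γH) * β ^ 2 * δ ^ 2 * |lam| ^ 3 := by ring

theorem negative_curvature_step_decrease {n : ℕ} (f : EuclideanSpace ℝ (Fin n) → ℝ)
    (LH : ℝ) (hLH : 0 < LH) (hf : ContDiff ℝ 2 f)
    (hlip : ∀ x y, ‖fderiv ℝ (gradient f) x - fderiv ℝ (gradient f) y‖ ≤ LH * ‖x - y‖)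
    (x p : EuclideanSpace ℝ (Fin n)) (H : EuclideanSpace ℝ (Fin n) →L[ℝ] EuclideanSpace ℝ (Fin n))
    (hHsymm : ∀ u v, ⟪H u, v⟫ = ⟪u, H v⟫)
    (lam : ℝ) (hlam : lam < 0)
    (hmin : ∀ u, lam * ‖u‖ ^ 2 ≤ ⟪u, H u⟫)
    (heig : ∃ u : EuclideanSpace ℝ (Fin n), u ≠ 0 ∧ H u = lam • u)
    (γ δ γH : ℝ) (hγ0 : 0 < γ) (hγ1 : γ ≤ 1) (hδ : 0 < δ) (hγH0 : 0 ≤ γH) (hγH : γH < γ)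
    (hp1 : ⟪p, H p⟫ ≤ γ * lam * ‖p‖ ^ 2)
    (hp2 : ‖p‖ = δ * |lam|)
    (hp3 : ⟪gradient f x, p⟫ ≤ 0)
    (hp4 : ‖H p - fderiv ℝ (gradient f) x p‖ ≤ γH * |lam| * ‖p‖)
    (β : ℝ) (hβ0 : 0 < β) (hβ : β ≤ (γ - γH) / (δ * LH)) :
    f (x + β • p) ≤ f x - (1 / 3) * (γ - γH) * β ^ 2 * δ ^ 2 * |lam| ^ 3 :=
  negative_curvature_step_decrease_general f LH hLH hf hlip x p H lam hlam γ δ γH hδ hp1 hp2 hp3 hp4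
    β hβ0 hβ
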